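/- arXiv:2511.08786 — 2 statements merged into one kernel-verified Lean document; each statement's English description precedes it below -/
import Mathlib

section
/- Let X ⊆ Π be any set of permutations and suppose there is a betting game (on languages) that succeeds on L_π for every π ∈ X. Then there is a permutation betting game that succeeds on every π ∈ X. -/
open Filter MeasureTheory

/-- Binary strings. -/
abbrev Str := List Bool

/-- The standard length-lexicographic enumeration `s_0 = λ, s_1 = 0, s_2 = 1, s_3 = 00, …`
of binary strings: `stdEnum n` is the binary representation of `n+1` with the leading 1 removed. -/
def stdEnum (n : ℕ) : Str := ((n + 1).bits.dropLast).reverse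

/-- The set Π of length-preserving permutations of `{0,1}*`. -/
structure LPPerm where
  toFun : Str → Str
  bij : Function.Bijective toFun
  lenPres : ∀ x, (toFun x).length = x.length

/-- `g` is a prefix partial permutation: a finite list of pairwise distinct binary strings
with `|g(s_i)| = |s_i|` for all `i < |g|`. -/
def IsPPP (g : List Str) : Prop :=
  g.Nodup ∧ ∀ i (h : i < g.length), (g.get ⟨i, h⟩).length = (stdEnum i).length

/-- The finite set of binary strings of length `n`. -/
def strsOfLen (n : ℕ) : Finset Str :=
  (Finset.univ : Finset (Fin n → Bool)).image List.ofFn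

/-- `free(g)`: strings of length `|s_{|g|}|` that do not occur as entries of `g`. -/
def freeSet (g : List Str) : Finset Str :=
  (strsOfLen (stdEnum g.length).length).filter (fun x => x ∉ g)

/-- A permutation martingale: nonnegative and satisfying the averaging condition
`d(g) = (1/|free(g)|) · Σ_{x ∈ free(g)} d((g,x))` on prefix partial permutations. -/
def IsPermMartingale (d : List Str → ℝ) : Prop :=
  (∀ g, 0 ≤ d g) ∧
    ∀ g, IsPPP g → d g = (1 / ((freeSet g).card : ℝ)) * ∑ x ∈ freeSet g, d (g ++ [x])

/-- The cylinder measure `μ(g) = (∏_{k<n} 1/(2^k)!) · (2^n − m)!/(2^n)!` where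
`2^n − 1 ≤ |g| < 2^{n+1} − 1` (so `n = log2(|g|+1)`) and `m = |g| − (2^n − 1)`. -/
noncomputable def muPPP (g : List Str) : ℝ :=
  (∏ k ∈ Finset.range (Nat.log2 (g.length + 1)), (1 : ℝ) / (Nat.factorial (2 ^ k))) *
      (Nat.factorial
        (2 ^ Nat.log2 (g.length + 1) - (g.length - (2 ^ Nat.log2 (g.length + 1) - 1)))) /
      (Nat.factorial (2 ^ Nat.log2 (g.length + 1)))

/-- The cylinder of all permutations extending the prefix partial permutation `g`. -/
def cyl (g : List Str) : Set LPPerm :=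
  {π | ∀ i (h : i < g.length), π.toFun (stdEnum i) = g.get ⟨i, h⟩}

/-- The σ-algebra `F_Π` generated by the cylinders. -/
instance : MeasurableSpace LPPerm :=
  MeasurableSpace.generateFrom {S | ∃ g, IsPPP g ∧ S = cyl g}

/-- `π↾N = [π(s_0), …, π(s_{N−1})]`. -/
def LPPerm.restrict (π : LPPerm) (N : ℕ) : List Str :=
  (List.range N).map (fun i => π.toFun (stdEnum i))

/-- `d` succeeds on `π`: `limsup_{N→∞} d(π↾N) = ∞`. -/
def succeedsOn (d : List Str → ℝ) (π : LPPerm) : Prop :=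
  ∀ C : ℝ, ∃ᶠ N in atTop, C < d (π.restrict N)

/-- The language `L_π = {x : |x| ≥ 1 and the first bit of π(0^{2|x|}x) is 1}`. -/
def Lpi (π : LPPerm) : Set Str :=
  {x | x ≠ [] ∧ (π.toFun (List.replicate (2 * x.length) false ++ x)).head? = some true}

/-- A betting game on languages: a query function `q` and a capital function `d` such that,
for every finite list `w` of (string, bit) pairs with pairwise distinct first components,
`q(w)` is not among the first components of `w` and `d(w) = (d(w[q(w),0]) + d(w[q(w),1]))/2`. -/
structure LangBG where
  q : List (Str × Bool) → Str
  d : List (Str × Bool) → ℝ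
  nonneg : ∀ w, 0 ≤ d w
  qFresh : ∀ w : List (Str × Bool), (w.map Prod.fst).Nodup → q w ∉ w.map Prod.fst
  avg : ∀ w : List (Str × Bool), (w.map Prod.fst).Nodup →
    d w = (d (w ++ [(q w, false)]) + d (w ++ [(q w, true)])) / 2

open Classical in
/-- The play of a language betting game against a language `A`:
`w_0 = []`, `w_{i+1} = w_i[q(w_i), A(q(w_i))]`. -/
noncomputable def LangBG.play (G : LangBG) (A : Set Str) : ℕ → List (Str × Bool)
  | 0 => []
  | i + 1 =>
      G.play A i ++ [(G.q (G.play A i), if G.q (G.play A i) ∈ A then true else false)]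

/-- A language betting game succeeds on `A` if `limsup_{i→∞} d(w_i) = ∞`. -/
def LangBG.succeedsOn (G : LangBG) (A : Set Str) : Prop :=
  ∀ C : ℝ, ∃ᶠ i in atTop, C < G.d (G.play A i)

/-- `w` is an ordered partial permutation: pairwise distinct first components, pairwise
distinct second components, and `|x| = |y|` for each pair `(x,y)`. -/
def IsOPP (w : List (Str × Str)) : Prop :=
  (w.map Prod.fst).Nodup ∧ (w.map Prod.snd).Nodup ∧ ∀ p ∈ w, p.1.length = p.2.length

/-- `free(w, n)`: length-`n` strings not among the second components of `w`. -/
def freeOPP (w : List (Str × Str)) (n : ℕ) : Finset Str :=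
  (strsOfLen n).filter (fun y => y ∉ w.map Prod.snd)

/-- A permutation betting game: a query function `q` and a capital function `d` such that
for every `w ∈ OPΠ`, `q(w)` is not among the first components of `w` and
`d(w) = (1/|free(w,n)|) · Σ_{b ∈ free(w,n)} d(w[q(w), b])` with `n = |q(w)|`. -/
structure PermBG where
  q : List (Str × Str) → Str
  d : List (Str × Str) → ℝ
  nonneg : ∀ w, 0 ≤ d w
  qFresh : ∀ w : List (Str × Str), IsOPP w → q w ∉ w.map Prod.fst
  avg : ∀ w : List (Str × Str), IsOPP w →
    d w = (1 / ((freeOPP w (q w).length).card : ℝ)) *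
      ∑ b ∈ freeOPP w (q w).length, d (w ++ [(q w, b)])

/-- The play of a permutation betting game against `π`:
`w_0 = []`, `w_{i+1} = w_i[q(w_i), π(q(w_i))]`. -/
def PermBG.play (G : PermBG) (π : LPPerm) : ℕ → List (Str × Str)
  | 0 => []
  | i + 1 => G.play π i ++ [(G.q (G.play π i), π.toFun (G.q (G.play π i)))]

/-- A permutation betting game succeeds on `π` if `limsup_{i→∞} d(w_i) = ∞`. -/
def PermBG.succeedsOn (G : PermBG) (π : LPPerm) : Prop :=
  ∀ C : ℝ, ∃ᶠ i in atTop, C < G.d (G.play π i)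


/-! ### Auxiliary development for Statement 13 -/

namespace Stmt13

lemma mem_strsOfLen {s : Str} {n : ℕ} : s ∈ strsOfLen n ↔ s.length = n := by
  constructor
  · rintro hs
    simp only [strsOfLen, Finset.mem_image] at hs
    obtain ⟨f, -, rfl⟩ := hs
    simp
  · intro hl
    simp only [strsOfLen, Finset.mem_image]
    subst hl
    exact ⟨fun i => s.get i, Finset.mem_univ _, List.ofFn_get s⟩

lemma card_strsOfLen (n : ℕ) : (strsOfLen n).card = 2 ^ n := by
  rw [strsOfLen, Finset.card_image_of_injective _ (fun f g h => by
    have : List.ofFn f = List.ofFn g := h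
    rwa [List.ofFn_inj] at this)]
  simp

lemma card_strsOfLen_headI (n : ℕ) (t : Bool) :
    ((strsOfLen (n+1)).filter (fun s => s.headI = t)).card = 2 ^ n := by
  rw [← card_strsOfLen n]
  apply Finset.card_bij (fun s _ => s.tail)
  · rintro s hs
    simp only [Finset.mem_filter, mem_strsOfLen] at hs
    simp [mem_strsOfLen, hs.1]
  · rintro a ha b hb hab
    simp only [Finset.mem_filter, mem_strsOfLen] at ha hb
    rcases a with _ | ⟨x, a⟩; · simp at ha
    rcases b with _ | ⟨y, b⟩; · simp at hb
    simp only [List.headI] at ha hb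
    simp only [List.tail] at hab
    rw [hab, ha.2, ← hb.2]
  · intro b hb
    rw [mem_strsOfLen] at hb
    refine ⟨t :: b, ?_, rfl⟩
    simp [mem_strsOfLen, hb]

/-- The padded query `0^{2|x|} x`. -/
def padQ (x : Str) : Str := List.replicate (2 * x.length) false ++ x

lemma padQ_length (x : Str) : (padQ x).length = 3 * x.length := by
  simp [padQ]; ring

lemma padQ_headI {x : Str} (hx : x ≠ []) : (padQ x).headI = false := by
  rcases x with _ | ⟨b, y⟩
  · exact absurd rfl hx
  · simp [padQ, List.replicate_succ, Nat.mul_succ, Nat.mul_add]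

lemma padQ_inj {x y : Str} (h : padQ x = padQ y) : x = y := by
  have hl : 3 * x.length = 3 * y.length := by
    rw [← padQ_length, ← padQ_length, h]
  have hxy : x.length = y.length := by omega
  have := congrArg (fun l => List.drop (2 * x.length) l) h
  simpa [padQ, hxy, List.drop_left'] using this

lemma padQ_ne_nil {x : Str} (hx : x ≠ []) : padQ x ≠ [] := by
  intro h
  have := padQ_length x
  rw [h] at this
  rcases x with _ | _
  · exact hx rfl
  · simp at this

/-- Max length of first components. -/
def maxLen (w : List (Str × Str)) : ℕ := (w.map fun p => p.1.length).foldr max 0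

lemma le_maxLen {w : List (Str × Str)} {p : Str × Str} (hp : p ∈ w) :
    p.1.length ≤ maxLen w := by
  induction w with
  | nil => simp at hp
  | cons a l ih =>
    rw [List.mem_cons] at hp
    rcases hp with rfl | hp
    · simp [maxLen]
    · refine le_trans (ih hp) ?_
      simp only [maxLen, List.map_cons, List.foldr_cons]
      exact le_max_right _ _

/-- The fallback query: `1^{maxLen w + 1}`, always fresh. -/
def fallb (w : List (Str × Str)) : Str := List.replicate (maxLen w + 1) true

lemma fallb_length (w : List (Str × Str)) : (fallb w).length = maxLen w + 1 := by
  simp [fallb]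

lemma fallb_headI (w : List (Str × Str)) : (fallb w).headI = true := by
  simp [fallb, List.replicate_succ]

lemma fallb_not_mem_fst (w : List (Str × Str)) : fallb w ∉ w.map Prod.fst := by
  intro h
  obtain ⟨p, hp, hpe⟩ := List.mem_map.mp h
  have := le_maxLen hp
  rw [hpe, fallb_length] at this
  omega

lemma freeOPP_fallb {w : List (Str × Str)} (hw : IsOPP w) :
    freeOPP w (fallb w).length = strsOfLen (maxLen w + 1) := by
  rw [fallb_length, freeOPP]
  apply Finset.filter_true_of_mem
  intro s hs hmem
  obtain ⟨p, hp, hpe⟩ := List.mem_map.mp hmem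
  have h1 : p.1.length = p.2.length := hw.2.2 p hp
  have h2 := le_maxLen hp
  rw [mem_strsOfLen] at hs
  rw [hpe] at h1
  omega

lemma card_freeOPP_fallb {w : List (Str × Str)} (hw : IsOPP w) :
    (freeOPP w (fallb w).length).card = 2 ^ (maxLen w + 1) := by
  rw [freeOPP_fallb hw, card_strsOfLen]

/-- count of free strings of length `n` with given head bit -/
def cnt (w : List (Str × Str)) (n : ℕ) (t : Bool) : ℕ :=
  ((freeOPP w n).filter fun s => s.headI = t).card

lemma cnt_add_cnt (w : List (Str × Str)) (n : ℕ) :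
    cnt w n false + cnt w n true = (freeOPP w n).card := by
  rw [cnt, cnt]
  have := Finset.card_filter_add_card_filter_not
    (s := freeOPP w n) (p := fun s => s.headI = false)
  rw [← this]
  congr 1
  apply Finset.card_nbij id
  · intro s hs
    simp only [Finset.mem_coe, Finset.mem_filter, id] at hs ⊢
    exact ⟨hs.1, by simp [hs.2]⟩
  · intro a _ b _ h; exact h
  · intro s hs
    simp only [Finset.coe_filter, Set.mem_setOf_eq] at hs ⊢
    simp only [Bool.not_eq_false] at hs
    exact ⟨s, ⟨hs.1, hs.2⟩, rfl⟩

/-- State of the simulation: either dead with a frozen capital, or alive with the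
simulated language-game history `u` and correction factor `c`. -/
inductive SimSt where
  | dead (v : ℝ)
  | alive (u : List (Str × Bool)) (c : ℝ)

variable (G : LangBG)

/-- Value (capital) associated to a simulation state. -/
noncomputable def stVal : SimSt → ℝ
  | .dead v => v
  | .alive u c => G.d u * c

/-- The conditions for a "real" simulation step with language query `x`. -/
def goodReal (w : List (Str × Str)) (x : Str) : Prop :=
  padQ x ∉ w.map Prod.fst ∧ 0 < cnt w (padQ x).length false ∧ 0 < cnt w (padQ x).length true

instance (w : List (Str × Str)) (x : Str) : Decidable (goodReal w x) := by
  unfold goodReal; infer_instance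

open Classical in
/-- The next query of the simulated permutation game. -/
noncomputable def query (s : SimSt) (w : List (Str × Str)) : Str :=
  match s with
  | .dead _ => fallb w
  | .alive u _ =>
    if G.q u = [] then fallb w
    else if goodReal w (G.q u) then padQ (G.q u) else fallb w

open Classical in
/-- The state update of the simulated permutation game upon observing answer `b`. -/
noncomputable def step (s : SimSt) (w : List (Str × Str)) (b : Str) : SimSt :=
  match s with
  | .dead v => .dead v
  | .alive u c =>
    if G.q u = [] then
      (if G.d (u ++ [([], false)]) = 0 then .dead (G.d u * c)
       else .alive (u ++ [([], false)]) (c * (G.d u / G.d (u ++ [([], false)]))))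
    else if goodReal w (G.q u) then
      .alive (u ++ [(G.q u, b.headI)])
        (c * (((cnt w (padQ (G.q u)).length false : ℝ) + (cnt w (padQ (G.q u)).length true : ℝ)) /
              (2 * (cnt w (padQ (G.q u)).length b.headI : ℝ))))
    else .dead (G.d u * c)

noncomputable def stepP : (SimSt × List (Str × Str)) → (Str × Str) → (SimSt × List (Str × Str)) :=
  fun p e => (step G p.1 p.2 e.2, p.2 ++ [e])

/-- The simulation state after processing history `w`. -/
noncomputable def state (w : List (Str × Str)) : SimSt :=
  (w.foldl (stepP G) (.alive [] 1, [])).1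

lemma foldl_stepP_snd : ∀ (w : List (Str × Str)) (s : SimSt) (v : List (Str × Str)),
    (List.foldl (stepP G) (s, v) w).2 = v ++ w := by
  intro w
  induction w with
  | nil => intro s v; simp
  | cons e w ih =>
    intro s v
    rw [List.foldl_cons]
    show (List.foldl (stepP G) (step G s v e.2, v ++ [e]) w).2 = v ++ e :: w
    rw [ih]
    simp

lemma state_nil : state G [] = .alive [] 1 := rfl

lemma state_concat (w : List (Str × Str)) (e : Str × Str) :
    state G (w ++ [e]) = step G (state G w) w e.2 := by
  show (List.foldl (stepP G) (SimSt.alive [] 1, []) (w ++ [e])).1 = _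
  rw [List.foldl_append, List.foldl_cons, List.foldl_nil]
  rcases hp : List.foldl (stepP G) (SimSt.alive [] 1, []) w with ⟨s, v⟩
  have h := foldl_stepP_snd G w (SimSt.alive [] 1) []
  rw [hp] at h
  simp only [List.nil_append] at h
  subst h
  show step G s v e.2 = step G (state G v) v e.2
  rw [state, hp]

/-- Basic well-formedness invariant of reachable simulation states. -/
def StOK : SimSt → Prop
  | .dead v => 0 ≤ v
  | .alive u c => 0 ≤ c ∧ (u.map Prod.fst).Nodup

lemma stOK_step {s : SimSt} (hs : StOK s) (w : List (Str × Str)) (b : Str) :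
    StOK (step G s w b) := by
  cases s with
  | dead v => exact hs
  | alive u c =>
    obtain ⟨hc, hnd⟩ := hs
    have hGd : ∀ u', 0 ≤ G.d u' := G.nonneg
    have hfresh := G.qFresh u hnd
    simp only [step]
    split_ifs with h1 h2 h3
    · exact mul_nonneg (hGd u) hc
    · constructor
      · exact mul_nonneg hc (div_nonneg (hGd u) (hGd _))
      · rw [List.map_append, List.nodup_append]
        refine ⟨hnd, List.nodup_singleton _, ?_⟩
        rintro a ha _ hb rfl
        simp only [List.map_cons, List.map_nil, List.mem_singleton] at hb
        subst hb
        rw [← h1] at ha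
        exact hfresh ha
    · constructor
      · refine mul_nonneg hc (div_nonneg ?_ ?_)
        · positivity
        · positivity
      · rw [List.map_append, List.nodup_append]
        refine ⟨hnd, List.nodup_singleton _, ?_⟩
        rintro a ha _ hb rfl
        simp only [List.map_cons, List.map_nil, List.mem_singleton] at hb
        subst hb
        exact hfresh ha
    · exact mul_nonneg (hGd u) hc

lemma stOK_state (w : List (Str × Str)) : StOK (state G w) := by
  induction w using List.reverseRecOn with
  | nil => exact ⟨zero_le_one, List.nodup_nil⟩
  | append_singleton w e ih =>
    rw [state_concat]
    exact stOK_step G ih w e.2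

lemma stVal_nonneg (s : SimSt) (hs : StOK s) : 0 ≤ stVal G s := by
  cases s with
  | dead v => exact hs
  | alive u c => exact mul_nonneg (G.nonneg u) hs.1

lemma card_filter_mem_snd_le {w : List (Str × Str)} (hw : IsOPP w) (n : ℕ) :
    ((strsOfLen n).filter (fun y => y ∈ w.map Prod.snd)).card
      ≤ w.countP (fun p => decide (p.1.length = n)) := by
  have hsub : ((strsOfLen n).filter (fun y => y ∈ w.map Prod.snd)) ⊆
      ((w.filter (fun p => decide (p.1.length = n))).map Prod.snd).toFinset := by
    intro y hy
    simp only [Finset.mem_filter, mem_strsOfLen] at hy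
    obtain ⟨hylen, hymem⟩ := hy
    obtain ⟨p, hp, hpe⟩ := List.mem_map.mp hymem
    rw [List.mem_toFinset, List.mem_map]
    refine ⟨p, List.mem_filter.mpr ⟨hp, ?_⟩, hpe⟩
    have := hw.2.2 p hp
    rw [decide_eq_true_eq]
    rw [this, hpe, hylen]
  calc ((strsOfLen n).filter (fun y => y ∈ w.map Prod.snd)).card
      ≤ ((w.filter (fun p => decide (p.1.length = n))).map Prod.snd).toFinset.card :=
        Finset.card_le_card hsub
    _ ≤ ((w.filter (fun p => decide (p.1.length = n))).map Prod.snd).length :=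
        List.toFinset_card_le _
    _ = w.countP (fun p => decide (p.1.length = n)) := by
        rw [List.length_map, List.countP_eq_length_filter]

lemma card_freeOPP_ge {w : List (Str × Str)} (hw : IsOPP w) (n : ℕ) :
    2 ^ n - w.countP (fun p => decide (p.1.length = n)) ≤ (freeOPP w n).card := by
  have h1 := Finset.card_filter_add_card_filter_not
    (s := strsOfLen n) (p := fun y => y ∉ w.map Prod.snd)
  have h2 : ((strsOfLen n).filter (fun y => ¬ y ∉ w.map Prod.snd)).card
      = ((strsOfLen n).filter (fun y => y ∈ w.map Prod.snd)).card := by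
    congr 1
    apply Finset.filter_congr
    intro y _
    simp
  have h3 := card_filter_mem_snd_le hw n
  have h4 := card_strsOfLen n
  rw [h2] at h1
  rw [freeOPP]
  omega

lemma cnt_le_half (w : List (Str × Str)) (n : ℕ) (t : Bool) :
    cnt w (n+1) t ≤ 2 ^ n := by
  rw [← card_strsOfLen_headI n t, cnt]
  apply Finset.card_le_card
  exact Finset.filter_subset_filter _ (Finset.filter_subset _ _)

lemma cnt_ge {w : List (Str × Str)} (hw : IsOPP w) (n : ℕ) (t : Bool) :
    ((strsOfLen n).filter (fun s => s.headI = t)).card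
      - w.countP (fun p => decide (p.1.length = n)) ≤ cnt w n t := by
  have hsub : (strsOfLen n).filter (fun s => s.headI = t) ⊆
      ((freeOPP w n).filter (fun s => s.headI = t)) ∪
        ((strsOfLen n).filter (fun y => y ∈ w.map Prod.snd)) := by
    intro s hs
    simp only [Finset.mem_filter] at hs
    by_cases hmem : s ∈ w.map Prod.snd
    · exact Finset.mem_union_right _ (Finset.mem_filter.mpr ⟨hs.1, hmem⟩)
    · refine Finset.mem_union_left _ (Finset.mem_filter.mpr ⟨?_, hs.2⟩)
      rw [freeOPP, Finset.mem_filter]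
      exact ⟨hs.1, hmem⟩
  have := Finset.card_le_card hsub
  have h2 := Finset.card_union_le ((freeOPP w n).filter (fun s => s.headI = t))
    ((strsOfLen n).filter (fun y => y ∈ w.map Prod.snd))
  have h3 := card_filter_mem_snd_le hw n
  rw [cnt]
  omega

lemma sim_qFresh (w : List (Str × Str)) (hw : IsOPP w) :
    query G (state G w) w ∉ w.map Prod.fst := by
  rcases hst : state G w with v | ⟨u, c⟩
  · simpa [query] using fallb_not_mem_fst w
  · simp only [query]
    split_ifs with h1 h2
    · exact fallb_not_mem_fst w
    · exact h2.1
    · exact fallb_not_mem_fst w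

lemma avg_of_const (w : List (Str × Str)) (hw : IsOPP w)
    (hc : ∀ b, stVal G (step G (state G w) w b) = stVal G (state G w)) :
    stVal G (state G w) = (1 / ((freeOPP w (fallb w).length).card : ℝ)) *
      ∑ b ∈ freeOPP w (fallb w).length, stVal G (state G (w ++ [(fallb w, b)])) := by
  have hterm : ∀ b ∈ freeOPP w (fallb w).length,
      stVal G (state G (w ++ [(fallb w, b)])) = stVal G (state G w) := by
    intro b _
    rw [state_concat]
    exact hc b
  rw [Finset.sum_congr rfl hterm, Finset.sum_const, nsmul_eq_mul, card_freeOPP_fallb hw]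
  have h2 : ((2 ^ (maxLen w + 1) : ℕ) : ℝ) ≠ 0 := by positivity
  field_simp

lemma sim_avg (w : List (Str × Str)) (hw : IsOPP w) :
    stVal G (state G w) = (1 / ((freeOPP w (query G (state G w) w).length).card : ℝ)) *
      ∑ b ∈ freeOPP w (query G (state G w) w).length,
        stVal G (state G (w ++ [(query G (state G w) w, b)])) := by
  have hOK := stOK_state G w
  rcases hst : state G w with v | ⟨u, c⟩
  · -- dead case
    have hq : query G (SimSt.dead v) w = fallb w := rfl
    rw [hq, ← hst]
    apply avg_of_const G w hw
    intro b
    rw [hst]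
    rfl
  · rw [hst] at hOK
    obtain ⟨hcge, hnd⟩ := hOK
    by_cases h1 : G.q u = []
    · -- forced case
      have hq : query G (SimSt.alive u c) w = fallb w := by
        simp only [query, if_pos h1]
      rw [hq, ← hst]
      apply avg_of_const G w hw
      intro b
      rw [hst]
      simp only [step, if_pos h1]
      by_cases h0 : G.d (u ++ [([], false)]) = 0
      · rw [if_pos h0]
        show G.d u * c = G.d u * c
        rfl
      · rw [if_neg h0]
        show G.d (u ++ [([], false)]) * (c * (G.d u / G.d (u ++ [([], false)]))) = G.d u * c
        field_simp
    · by_cases h2 : goodReal w (G.q u)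
      · -- real case
        set x := G.q u with hx
        set n := (padQ x).length with hn
        have hq : query G (SimSt.alive u c) w = padQ x := by
          simp only [query, ← hx, if_neg h1, if_pos h2]
        rw [hq, ← hn]
        have hstep : ∀ b : Str, state G (w ++ [(padQ x, b)]) =
            SimSt.alive (u ++ [(x, b.headI)])
              (c * (((cnt w n false : ℝ) + (cnt w n true : ℝ)) / (2 * (cnt w n b.headI : ℝ)))) := by
          intro b
          rw [state_concat, hst]
          simp only [step, ← hx, ← hn, if_neg h1, if_pos h2]
        have hterm : ∀ b ∈ freeOPP w n,
            stVal G (state G (w ++ [(padQ x, b)])) = G.d (u ++ [(x, b.headI)]) *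
              (c * (((cnt w n false : ℝ) + (cnt w n true : ℝ)) / (2 * (cnt w n b.headI : ℝ)))) := by
          intro b _
          rw [hstep b]
          rfl
        rw [Finset.sum_congr rfl hterm]
        rw [← Finset.sum_filter_add_sum_filter_not (freeOPP w n) (fun s => s.headI = true)]
        have hcc : Finset.filter (fun s => ¬ List.headI s = true) (freeOPP w n)
            = Finset.filter (fun s => List.headI s = false) (freeOPP w n) := by
          apply Finset.filter_congr
          intro y _
          simp
        have e1 : ∑ b ∈ (freeOPP w n).filter (fun s => s.headI = true),
            G.d (u ++ [(x, b.headI)]) *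
              (c * (((cnt w n false : ℝ) + (cnt w n true : ℝ)) / (2 * (cnt w n b.headI : ℝ))))
            = (cnt w n true : ℝ) * (G.d (u ++ [(x, true)]) *
              (c * (((cnt w n false : ℝ) + (cnt w n true : ℝ)) / (2 * (cnt w n true : ℝ))))) := by
          rw [Finset.sum_congr rfl (fun b hb => by
            rw [(Finset.mem_filter.mp hb).2] :
              ∀ b ∈ (freeOPP w n).filter (fun s => s.headI = true),
                G.d (u ++ [(x, b.headI)]) *
                  (c * (((cnt w n false : ℝ) + (cnt w n true : ℝ)) / (2 * (cnt w n b.headI : ℝ))))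
                = G.d (u ++ [(x, true)]) *
                  (c * (((cnt w n false : ℝ) + (cnt w n true : ℝ)) / (2 * (cnt w n true : ℝ)))))]
          rw [Finset.sum_const, nsmul_eq_mul]
          rfl
        have e2 : ∑ b ∈ (freeOPP w n).filter (fun s => ¬ s.headI = true),
            G.d (u ++ [(x, b.headI)]) *
              (c * (((cnt w n false : ℝ) + (cnt w n true : ℝ)) / (2 * (cnt w n b.headI : ℝ))))
            = (cnt w n false : ℝ) * (G.d (u ++ [(x, false)]) *
              (c * (((cnt w n false : ℝ) + (cnt w n true : ℝ)) / (2 * (cnt w n false : ℝ))))) := by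
          rw [hcc]
          rw [Finset.sum_congr rfl (fun b hb => by
            rw [(Finset.mem_filter.mp hb).2] :
              ∀ b ∈ (freeOPP w n).filter (fun s => s.headI = false),
                G.d (u ++ [(x, b.headI)]) *
                  (c * (((cnt w n false : ℝ) + (cnt w n true : ℝ)) / (2 * (cnt w n b.headI : ℝ))))
                = G.d (u ++ [(x, false)]) *
                  (c * (((cnt w n false : ℝ) + (cnt w n true : ℝ)) / (2 * (cnt w n false : ℝ)))))]
          rw [Finset.sum_const, nsmul_eq_mul]
          rfl
        rw [e1, e2]
        have hcard : ((freeOPP w n).card : ℝ) = (cnt w n false : ℝ) + (cnt w n true : ℝ) := by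
          rw [← cnt_add_cnt w n]
          push_cast
          ring
        have hc0 : (0:ℝ) < (cnt w n false : ℝ) := by exact_mod_cast h2.2.1
        have hc1 : (0:ℝ) < (cnt w n true : ℝ) := by exact_mod_cast h2.2.2
        have havg := G.avg u hnd
        rw [← hx] at havg
        show G.d u * c = _
        rw [havg, hcard]
        field_simp
        ring
      · -- stall case
        have hq : query G (SimSt.alive u c) w = fallb w := by
          simp only [query, if_neg h1, if_neg h2]
        rw [hq, ← hst]
        apply avg_of_const G w hw
        intro b
        rw [hst]
        simp only [step, if_neg h1, if_neg h2]
        rfl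

/-- The simulated permutation betting game. -/
noncomputable def simBG : PermBG where
  q w := query G (state G w) w
  d w := stVal G (state G w)
  nonneg w := stVal_nonneg G _ (stOK_state G w)
  qFresh w hw := sim_qFresh G w hw
  avg w hw := sim_avg G w hw

/-! ### Language-game play lemmas -/

open Classical in
lemma langPlay_succ (A : Set Str) (i : ℕ) :
    G.play A (i+1) = G.play A i ++
      [(G.q (G.play A i), if G.q (G.play A i) ∈ A then true else false)] := rfl

lemma langPlay_nodup (A : Set Str) : ∀ i, ((G.play A i).map Prod.fst).Nodup := by
  intro i
  induction i with
  | zero => simp [LangBG.play]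
  | succ i ih =>
    rw [langPlay_succ, List.map_append, List.nodup_append]
    refine ⟨ih, List.nodup_singleton _, ?_⟩
    rintro a ha _ hb rfl
    simp only [List.map_cons, List.map_nil, List.mem_singleton] at hb
    subst hb
    exact G.qFresh _ ih ha

lemma langPlay_pos {A : Set Str} (hs : G.succeedsOn A) (i : ℕ) :
    0 < G.d (G.play A i) := by
  by_contra hle
  push_neg at hle
  have hi0 : G.d (G.play A i) = 0 := le_antisymm hle (G.nonneg _)
  have hall : ∀ k, G.d (G.play A (i + k)) = 0 := by
    intro k
    induction k with
    | zero => exact hi0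
    | succ k ih =>
      have havg := G.avg (G.play A (i + k)) (langPlay_nodup G A (i + k))
      have h0 := G.nonneg (G.play A (i+k) ++ [(G.q (G.play A (i+k)), false)])
      have h1 := G.nonneg (G.play A (i+k) ++ [(G.q (G.play A (i+k)), true)])
      rw [ih] at havg
      show G.d (G.play A ((i + k) + 1)) = 0
      rw [langPlay_succ]
      by_cases hmem : G.q (G.play A (i+k)) ∈ A
      · rw [if_pos hmem]; linarith
      · rw [if_neg hmem]; linarith
  obtain ⟨j, hji, hj⟩ := Filter.frequently_atTop.mp (hs 0) i
  have := hall (j - i)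
  rw [Nat.add_sub_cancel' hji] at this
  linarith

lemma forced_le {u : List (Str × Bool)} (hnd : (u.map Prod.fst).Nodup)
    (h1 : G.q u = []) : G.d (u ++ [(([]:Str), false)]) ≤ 2 * G.d u := by
  have havg := G.avg u hnd
  rw [h1] at havg
  have := G.nonneg (u ++ [(([]:Str), true)])
  linarith

open Classical in
lemma bit_correct (π : LPPerm) {x : Str} (hx : x ≠ []) :
    (if x ∈ Lpi π then true else false) = (π.toFun (padQ x)).headI := by
  have hlen : (π.toFun (padQ x)).length = (padQ x).length := π.lenPres _
  rcases hpi : π.toFun (padQ x) with _ | ⟨b, l⟩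
  · exfalso
    rw [hpi] at hlen
    exact padQ_ne_nil hx (List.length_eq_zero_iff.mp hlen.symm)
  · simp only [List.headI]
    by_cases hA : x ∈ Lpi π
    · rw [if_pos hA]
      have h2 : (π.toFun (padQ x)).head? = some true := hA.2
      rw [hpi] at h2
      simp only [List.head?] at h2
      exact (Option.some.inj h2).symm
    · rw [if_neg hA]
      cases hb : b
      · rfl
      · exfalso
        apply hA
        refine ⟨hx, ?_⟩
        show (π.toFun (padQ x)).head? = some true
        rw [hpi, hb]
        rfl

/-! ### The potential function and its bounds -/

/-- `Sval u = Σ_{x a nonempty query of u} 2·(1/4)^{|x|}`. -/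
noncomputable def Sval (u : List (Str × Bool)) : ℝ :=
  ∑ y ∈ ((u.map Prod.fst).toFinset.erase ([]:Str)), 2 * ((1:ℝ)/4) ^ y.length

lemma sum_halves (L : ℕ) :
    ∑ m ∈ Finset.range L, ((1:ℝ)/2) ^ m = 2 - 2 * ((1:ℝ)/2) ^ L := by
  induction L with
  | zero => simp
  | succ L ih => rw [Finset.sum_range_succ, ih]; ring

lemma sum_quarter_le (S : Finset Str) (h : ([]:Str) ∉ S) :
    ∑ y ∈ S, ((1:ℝ)/4) ^ y.length ≤ 1 := by
  classical
  set L := S.sup (fun y => y.length) with hL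
  have hmap : ∀ y ∈ S, y.length ∈ Finset.range (L+1) := fun y hy =>
    Finset.mem_range.mpr (Nat.lt_succ_of_le (Finset.le_sup hy))
  rw [← Finset.sum_fiberwise_of_maps_to hmap (fun y => ((1:ℝ)/4) ^ y.length)]
  have hin : ∀ m ∈ Finset.range (L+1),
      (∑ y ∈ S.filter (fun y => y.length = m), ((1:ℝ)/4) ^ y.length)
        ≤ (if m = 0 then 0 else ((1:ℝ)/2) ^ m) := by
    intro m _
    have hconst : ∀ y ∈ S.filter (fun y => y.length = m),
        ((1:ℝ)/4) ^ y.length = ((1:ℝ)/4) ^ m := by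
      intro y hy
      rw [(Finset.mem_filter.mp hy).2]
    rw [Finset.sum_congr rfl hconst, Finset.sum_const, nsmul_eq_mul]
    by_cases hm : m = 0
    · rw [if_pos hm]
      have : S.filter (fun y => y.length = m) = ∅ := by
        apply Finset.filter_false_of_mem
        intro y hy hcon
        rw [hm] at hcon
        exact h (by rwa [List.length_eq_zero_iff.mp hcon] at hy)
      rw [this]
      simp
    · rw [if_neg hm]
      have hcard : (S.filter (fun y => y.length = m)).card ≤ 2 ^ m := by
        rw [← card_strsOfLen m]
        apply Finset.card_le_card
        intro y hy
        rw [mem_strsOfLen]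
        exact (Finset.mem_filter.mp hy).2
      have h4 : (0:ℝ) ≤ ((1:ℝ)/4) ^ m := by positivity
      calc ((S.filter (fun y => y.length = m)).card : ℝ) * ((1:ℝ)/4) ^ m
          ≤ ((2:ℝ)) ^ m * ((1:ℝ)/4) ^ m := by
            apply mul_le_mul_of_nonneg_right _ h4
            exact_mod_cast hcard
        _ = ((1:ℝ)/2) ^ m := by
            rw [← mul_pow]
            norm_num
  calc ∑ m ∈ Finset.range (L+1), ∑ y ∈ S.filter (fun y => y.length = m), ((1:ℝ)/4) ^ y.length
      ≤ ∑ m ∈ Finset.range (L+1), (if m = 0 then 0 else ((1:ℝ)/2) ^ m) :=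
        Finset.sum_le_sum hin
    _ = ∑ m ∈ Finset.range L, ((1:ℝ)/2) ^ (m+1) := by
        rw [Finset.sum_range_succ']
        simp
    _ ≤ 1 := by
        have : ∑ m ∈ Finset.range L, ((1:ℝ)/2) ^ (m+1)
            = (1/2) * ∑ m ∈ Finset.range L, ((1:ℝ)/2) ^ m := by
          rw [Finset.mul_sum]
          apply Finset.sum_congr rfl
          intro m _
          ring
        rw [this, sum_halves]
        have : (0:ℝ) ≤ ((1:ℝ)/2) ^ L := by positivity
        linarith

lemma Sval_le (u : List (Str × Bool)) : Sval u ≤ 2 := by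
  have h := sum_quarter_le ((u.map Prod.fst).toFinset.erase ([]:Str))
    (Finset.notMem_erase _ _)
  rw [Sval]
  have : ∑ y ∈ ((u.map Prod.fst).toFinset.erase ([]:Str)), 2 * ((1:ℝ)/4) ^ y.length
      = 2 * ∑ y ∈ ((u.map Prod.fst).toFinset.erase ([]:Str)), ((1:ℝ)/4) ^ y.length := by
    rw [Finset.mul_sum]
  rw [this]
  linarith

lemma Sval_nonneg (u : List (Str × Bool)) : 0 ≤ Sval u := by
  apply Finset.sum_nonneg
  intro y _
  positivity

lemma Sval_append_ne {u : List (Str × Bool)} {x : Str} {b : Bool}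
    (hx : x ≠ []) (hmem : x ∉ u.map Prod.fst) :
    Sval (u ++ [(x, b)]) = Sval u + 2 * ((1:ℝ)/4) ^ x.length := by
  rw [Sval, Sval]
  have h1 : ((u ++ [(x, b)]).map Prod.fst).toFinset
      = insert x (u.map Prod.fst).toFinset := by
    rw [List.map_append, List.toFinset_append]
    ext a; simp [or_comm]
  rw [h1, Finset.erase_insert_of_ne hx]
  rw [Finset.sum_insert (fun hc => hmem (List.mem_toFinset.mp (Finset.mem_of_mem_erase hc)))]
  ring

lemma Sval_append_nil {u : List (Str × Bool)} {b : Bool} :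
    Sval (u ++ [(([]:Str), b)]) = Sval u := by
  rw [Sval, Sval]
  have h1 : ((u ++ [(([]:Str), b)]).map Prod.fst).toFinset
      = insert ([]:Str) (u.map Prod.fst).toFinset := by
    rw [List.map_append, List.toFinset_append]
    ext a; simp [or_comm]
  rw [h1, Finset.erase_insert_eq_erase]

lemma exp_le_one_sub {x : ℝ} (h0 : 0 ≤ x) (h2 : x ≤ 1/2) :
    Real.exp (-(2*x)) ≤ 1 - x := by
  have h1 : (0:ℝ) < 1 + 2*x := by linarith
  have he : 1 + 2*x ≤ Real.exp (2*x) := by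
    have := Real.add_one_le_exp (2*x)
    linarith
  rw [Real.exp_neg]
  have hi : (Real.exp (2*x))⁻¹ ≤ (1 + 2*x)⁻¹ := by
    apply inv_anti₀ h1 he
  refine le_trans hi ?_
  rw [← one_div, div_le_iff₀ h1]
  nlinarith

/-! ### Counting entries of a given length along the play -/

lemma length_eq_countP_headI (l : List (Str × Str)) :
    l.length = l.countP (fun p => p.1.headI) + l.countP (fun p => !p.1.headI) := by
  induction l with
  | nil => rfl
  | cons a t ih =>
    rw [List.length_cons, List.countP_cons, List.countP_cons, ih]
    cases h : a.1.headI <;> simp [h] <;> omega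

lemma used_le {w : List (Str × Str)} {u : List (Str × Bool)} {x : Str} {m : ℕ}
    (hnd : (w.map Prod.fst).Nodup)
    (hstruct : ∀ p ∈ w, p.1.headI = true ∨
      ∃ x', x' ∈ u.map Prod.fst ∧ x' ≠ [] ∧ p.1 = padQ x')
    (hcount : w.countP (fun p => p.1.headI) ≤ 1)
    (hx : x ∉ u.map Prod.fst) (hxlen : x.length = m) :
    w.countP (fun p => decide (p.1.length = 3*m)) ≤ 2 ^ m := by
  classical
  set l := w.filter (fun p => decide (p.1.length = 3*m)) with hl
  have hlsub : l.Sublist w := List.filter_sublist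
  have hlen1 : w.countP (fun p => decide (p.1.length = 3*m)) = l.length := by
    rw [hl, List.countP_eq_length_filter]
  have hsplit := length_eq_countP_headI l
  have hpart1 : l.countP (fun p => p.1.headI) ≤ 1 := by
    refine le_trans ?_ hcount
    rw [hl, List.countP_filter]
    apply List.countP_mono_left
    intro p _ hp
    simp only [Bool.and_eq_true, decide_eq_true_eq] at hp
    exact hp.1
  -- the entries with headI ≠ true are padded queries of distinct strings ≠ x of length m
  set l2 := l.filter (fun p => !p.1.headI) with hl2
  have hl2sub : l2.Sublist w := List.Sublist.trans (List.filter_sublist (l := l)) hlsub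
  set B := l2.map Prod.fst with hB
  have hBnd : B.Nodup := (List.Sublist.map Prod.fst hl2sub).nodup hnd
  have hpart2 : l.countP (fun p => !p.1.headI) = B.length := by
    rw [List.countP_eq_length_filter, ← hl2, hB, List.length_map]
  have hBsub : B.toFinset ⊆ ((strsOfLen m).erase x).image padQ := by
    intro b hb
    rw [List.mem_toFinset, hB, List.mem_map] at hb
    obtain ⟨p, hp2, hpe⟩ := hb
    have hpl2 := hp2
    rw [hl2, List.mem_filter] at hpl2
    obtain ⟨hpl, hphead⟩ := hpl2
    have hpw := hlsub.subset hpl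
    have hplen : p.1.length = 3*m := by
      have := (List.mem_filter.mp hpl).2
      simpa using this
    rcases hstruct p hpw with hh | ⟨x', hx'mem, hx'ne, hx'eq⟩
    · rw [hh] at hphead
      simp at hphead
    · have hx'len : x'.length = m := by
        have := padQ_length x'
        rw [← hx'eq, hplen] at this
        omega
      rw [Finset.mem_image]
      refine ⟨x', ?_, by rw [← hx'eq, hpe]⟩
      rw [Finset.mem_erase, mem_strsOfLen]
      refine ⟨?_, hx'len⟩
      intro hcon
      rw [hcon] at hx'mem
      exact hx hx'mem
  have hBcard : B.length ≤ 2 ^ m - 1 := by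
    calc B.length = B.toFinset.card := (List.toFinset_card_of_nodup hBnd).symm
      _ ≤ (((strsOfLen m).erase x).image padQ).card := Finset.card_le_card hBsub
      _ ≤ ((strsOfLen m).erase x).card := Finset.card_image_le
      _ = 2 ^ m - 1 := by
          rw [Finset.card_erase_of_mem (mem_strsOfLen.mpr hxlen), card_strsOfLen]
  have hpow : 1 ≤ 2 ^ m := Nat.one_le_two_pow
  omega

lemma cnt_pos_of_good {w : List (Str × Str)} {x : Str} (hw : IsOPP w)
    (hm : 1 ≤ x.length)
    (hused : w.countP (fun p => decide (p.1.length = 3*x.length)) ≤ 2 ^ x.length)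
    (t : Bool) : 0 < cnt w (padQ x).length t := by
  have hge := cnt_ge hw (padQ x).length t
  rw [padQ_length] at hge ⊢
  have h3m : 3 * x.length = (3 * x.length - 1) + 1 := by omega
  have hcardh : ((strsOfLen (3 * x.length)).filter (fun s => s.headI = t)).card
      = 2 ^ (3 * x.length - 1) := by
    rw [h3m]
    exact card_strsOfLen_headI _ t
  rw [hcardh] at hge
  have h1 : 2 ^ (x.length + 1) ≤ 2 ^ (3 * x.length - 1) :=
    Nat.pow_le_pow_right (by norm_num) (by omega)
  have h2 : 2 ^ (x.length + 1) = 2 * 2 ^ x.length := by rw [Nat.pow_succ]; ring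
  have h3 : 1 ≤ 2 ^ x.length := Nat.one_le_two_pow
  omega

lemma goodReal_holds {w : List (Str × Str)} {u : List (Str × Bool)} {x : Str}
    (hw : IsOPP w)
    (hstruct : ∀ p ∈ w, p.1.headI = true ∨
      ∃ x', x' ∈ u.map Prod.fst ∧ x' ≠ [] ∧ p.1 = padQ x')
    (hcount : w.countP (fun p => p.1.headI) ≤ 1)
    (hx : x ∉ u.map Prod.fst) (hxne : x ≠ []) :
    goodReal w x := by
  have hm : 1 ≤ x.length := List.length_pos_iff.mpr hxne
  have hused := used_le hw.1 hstruct hcount hx rfl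
  refine ⟨?_, ?_, ?_⟩
  · intro hcon
    obtain ⟨p, hp, hpe⟩ := List.mem_map.mp hcon
    rcases hstruct p hp with hh | ⟨x', hx'mem, hx'ne, hx'eq⟩
    · rw [hpe, padQ_headI hxne] at hh
      simp at hh
    · rw [hx'eq] at hpe
      rw [padQ_inj hpe] at hx'mem
      exact hx hx'mem
  · exact cnt_pos_of_good hw hm hused false
  · exact cnt_pos_of_good hw hm hused true


lemma factor_ge {w : List (Str × Str)} (hw : IsOPP w) {m : ℕ} (hm : 1 ≤ m)
    (hused : w.countP (fun p => decide (p.1.length = 3*m)) ≤ 2 ^ m) (t : Bool)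
    (hpos : 0 < cnt w (3*m) t) :
    Real.exp (-(2 * ((1:ℝ)/4) ^ m)) ≤
      ((cnt w (3*m) false : ℝ) + (cnt w (3*m) true : ℝ)) / (2 * (cnt w (3*m) t : ℝ)) := by
  have hFnat : 2 ^ (3*m) - 2 ^ m ≤ cnt w (3*m) false + cnt w (3*m) true := by
    rw [cnt_add_cnt]
    have h1 := card_freeOPP_ge hw (3*m)
    have h2 := hused
    omega
  have htnat : cnt w (3*m) t ≤ 2 ^ (3*m - 1) := by
    have := cnt_le_half w (3*m - 1) t
    have h3 : 3*m - 1 + 1 = 3*m := by omega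
    rwa [h3] at this
  have hmle : (2:ℕ) ^ m ≤ 2 ^ (3*m) := Nat.pow_le_pow_right (by norm_num) (by omega)
  -- real versions
  have hF : (2:ℝ) ^ (3*m) - (2:ℝ) ^ m ≤ (cnt w (3*m) false : ℝ) + (cnt w (3*m) true : ℝ) := by
    have := (Nat.cast_le (α := ℝ)).mpr hFnat
    rw [Nat.cast_sub hmle] at this
    push_cast at this ⊢
    linarith
  have ht : (2:ℝ) * (cnt w (3*m) t : ℝ) ≤ (2:ℝ) ^ (3*m) := by
    have h1 := (Nat.cast_le (α := ℝ)).mpr htnat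
    have h3 : 3*m - 1 + 1 = 3*m := by omega
    have h4 : (2:ℝ) ^ (3*m) = 2 * (2:ℝ) ^ (3*m-1) := by
      conv_lhs => rw [← h3]
      rw [pow_succ]
      ring
    rw [h4]
    push_cast at h1
    linarith
  have htpos : (0:ℝ) < 2 * (cnt w (3*m) t : ℝ) := by
    have : (0:ℝ) < (cnt w (3*m) t : ℝ) := by exact_mod_cast hpos
    linarith
  have hq : ((1:ℝ)/4) ^ m = (2:ℝ) ^ m / (2:ℝ) ^ (3*m) := by
    have h8 : (2:ℝ) ^ (3*m) = 2 ^ m * 4 ^ m := by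
      rw [show 3*m = m + 2*m from by ring, pow_add, pow_mul]
      norm_num
    rw [h8, div_pow]
    rw [eq_div_iff (by positivity)]
    field_simp
    simp
  have hqle : ((1:ℝ)/4) ^ m ≤ 1/2 := by
    calc ((1:ℝ)/4) ^ m ≤ ((1:ℝ)/4) ^ 1 := by
          apply pow_le_pow_of_le_one (by norm_num) (by norm_num) hm
      _ ≤ 1/2 := by norm_num
  calc Real.exp (-(2 * ((1:ℝ)/4) ^ m)) ≤ 1 - ((1:ℝ)/4) ^ m :=
        exp_le_one_sub (by positivity) hqle
    _ = ((2:ℝ) ^ (3*m) - (2:ℝ) ^ m) / (2:ℝ) ^ (3*m) := by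
        rw [hq]
        field_simp
    _ ≤ ((cnt w (3*m) false : ℝ) + (cnt w (3*m) true : ℝ)) / (2 * (cnt w (3*m) t : ℝ)) := by
        apply div_le_div₀ (by positivity) hF htpos ht

/-! ### The play of the simulated game -/

lemma simPlay_succ (π : LPPerm) (i : ℕ) :
    (simBG G).play π (i+1) = (simBG G).play π i ++
      [((simBG G).q ((simBG G).play π i), π.toFun ((simBG G).q ((simBG G).play π i)))] := rfl

lemma simPlay_snd (π : LPPerm) : ∀ i, ∀ p ∈ (simBG G).play π i, p.2 = π.toFun p.1 := by
  intro i
  induction i with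
  | zero => intro p hp; simp [PermBG.play] at hp
  | succ i ih =>
    intro p hp
    rw [simPlay_succ, List.mem_append] at hp
    rcases hp with hp | hp
    · exact ih p hp
    · rw [List.mem_singleton] at hp
      rw [hp]

lemma simPlay_OPP (π : LPPerm) : ∀ i, IsOPP ((simBG G).play π i) := by
  intro i
  induction i with
  | zero =>
    refine ⟨List.nodup_nil, List.nodup_nil, ?_⟩
    intro p hp
    simp [PermBG.play] at hp
  | succ i ih =>
    set W := (simBG G).play π i with hW
    have hfresh := (simBG G).qFresh W ih
    set q' := (simBG G).q W with hq'
    rw [simPlay_succ, ← hW, ← hq']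
    refine ⟨?_, ?_, ?_⟩
    · rw [List.map_append, List.nodup_append]
      refine ⟨ih.1, List.nodup_singleton _, ?_⟩
      rintro a ha _ hb rfl
      simp only [List.map_cons, List.map_nil, List.mem_singleton] at hb
      subst hb
      exact hfresh ha
    · rw [List.map_append, List.nodup_append]
      refine ⟨ih.2.1, List.nodup_singleton _, ?_⟩
      rintro a ha _ hb rfl
      simp only [List.map_cons, List.map_nil, List.mem_singleton] at hb
      subst hb
      obtain ⟨p, hp, hpe⟩ := List.mem_map.mp ha
      have h2 := simPlay_snd G π i p hp
      rw [h2] at hpe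
      exact hfresh (List.mem_map.mpr ⟨p, hp, π.bij.1 hpe⟩)
    · intro p hp
      rw [List.mem_append] at hp
      rcases hp with hp | hp
      · exact ih.2.2 p hp
      · rw [List.mem_singleton] at hp
        rw [hp]
        exact (π.lenPres q').symm

lemma state_concat' (w : List (Str × Str)) (a b : Str) :
    state G (w ++ [(a, b)]) = step G (state G w) w b := state_concat G w (a, b)

open Classical in
lemma main_inv (π : LPPerm) (hpos : ∀ j, 0 < G.d (G.play (Lpi π) j)) (i : ℕ) :
    ∃ c : ℝ,
      state G ((simBG G).play π i) = SimSt.alive (G.play (Lpi π) i) c ∧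
      ((1:ℝ)/2) ^ (if ([]:Str) ∈ (G.play (Lpi π) i).map Prod.fst then 1 else 0) *
        Real.exp (-(Sval (G.play (Lpi π) i))) ≤ c ∧
      (∀ p ∈ (simBG G).play π i, p.1.headI = true ∨
        ∃ x', x' ∈ (G.play (Lpi π) i).map Prod.fst ∧ x' ≠ [] ∧ p.1 = padQ x') ∧
      ((simBG G).play π i).countP (fun p => p.1.headI) ≤
        (if ([]:Str) ∈ (G.play (Lpi π) i).map Prod.fst then 1 else 0) := by
  induction i with
  | zero =>
    refine ⟨1, state_nil G, ?_, ?_, ?_⟩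
    · have h0 : G.play (Lpi π) 0 = [] := rfl
      rw [h0]
      simp [Sval]
    · intro p hp
      have h0 : (simBG G).play π 0 = [] := rfl
      rw [h0] at hp
      simp at hp
    · have h0 : (simBG G).play π 0 = [] := rfl
      rw [h0]
      simp
  | succ i ih =>
    obtain ⟨c, hst, hb, hstruct, hcount⟩ := ih
    set u := G.play (Lpi π) i with hu
    set W := (simBG G).play π i with hW
    have hndu : (u.map Prod.fst).Nodup := langPlay_nodup G _ i
    have hOPP : IsOPP W := simPlay_OPP G π i
    have hq' : (simBG G).q W = query G (SimSt.alive u c) W := by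
      rw [show (simBG G).q W = query G (state G W) W from rfl, hst]
    have hc0 : 0 ≤ c :=
      le_trans (by positivity : (0:ℝ) ≤ ((1:ℝ)/2) ^
        (if ([]:Str) ∈ u.map Prod.fst then 1 else 0) * Real.exp (-(Sval u))) hb
    by_cases h1 : G.q u = []
    · -- forced step
      have hqf : (simBG G).q W = fallb W := by
        rw [hq']
        simp only [query]
        rw [if_pos h1]
      have hplay1 : G.play (Lpi π) (i+1) = u ++ [(([]:Str), false)] := by
        rw [langPlay_succ, ← hu, h1, if_neg (fun hmem => ((hmem.1 rfl) : False))]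
      have hdpos' := hpos (i+1)
      rw [hplay1] at hdpos'
      have hne0 : G.d (u ++ [(([]:Str), false)]) ≠ 0 := ne_of_gt hdpos'
      have hstate1 : state G ((simBG G).play π (i+1)) =
          SimSt.alive (u ++ [(([]:Str), false)])
            (c * (G.d u / G.d (u ++ [(([]:Str), false)]))) := by
        rw [simPlay_succ, ← hW, state_concat' G W _ _, hst]
        simp only [step]
        rw [if_pos h1, if_neg hne0]
      refine ⟨_, by rw [hstate1, ← hplay1], ?_, ?_, ?_⟩
      · -- bound
        have he0 : ([]:Str) ∉ u.map Prod.fst := by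
          rw [← h1]
          exact G.qFresh u hndu
        have hb' : Real.exp (-(Sval u)) ≤ c := by
          rw [if_neg he0, pow_zero, one_mul] at hb
          exact hb
        have he1 : ([]:Str) ∈ (u ++ [(([]:Str), false)]).map Prod.fst := by simp
        rw [hplay1, Sval_append_nil, if_pos he1, pow_one]
        have hhalf : (1:ℝ)/2 ≤ G.d u / G.d (u ++ [(([]:Str), false)]) := by
          rw [le_div_iff₀ hdpos']
          have h2 := forced_le G hndu h1
          have h3 := hpos i
          rw [← hu] at h3
          linarith
        calc ((1:ℝ)/2) * Real.exp (-(Sval u))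
            = Real.exp (-(Sval u)) * ((1:ℝ)/2) := mul_comm _ _
          _ ≤ c * (G.d u / G.d (u ++ [(([]:Str), false)])) :=
              mul_le_mul hb' hhalf (by norm_num) hc0
      · -- structure
        intro p hp
        rw [simPlay_succ, ← hW, List.mem_append] at hp
        rcases hp with hp | hp
        · rcases hstruct p hp with hh | ⟨x', hx'm, hx'ne, hx'eq⟩
          · exact Or.inl hh
          · refine Or.inr ⟨x', ?_, hx'ne, hx'eq⟩
            rw [hplay1, List.map_append, List.mem_append]
            exact Or.inl hx'm
        · rw [List.mem_singleton] at hp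
          rw [hp]
          left
          rw [hqf]
          exact fallb_headI W
      · -- count
        have he0 : ([]:Str) ∉ u.map Prod.fst := by
          rw [← h1]
          exact G.qFresh u hndu
        have he1 : ([]:Str) ∈ (G.play (Lpi π) (i+1)).map Prod.fst := by
          rw [hplay1]; simp
        rw [if_pos he1]
        rw [if_neg he0] at hcount
        rw [simPlay_succ, ← hW, List.countP_append, hqf]
        have : List.countP (fun p => p.1.headI) [(fallb W, π.toFun (fallb W))] = 1 := by
          rw [List.countP_cons]
          simp [fallb_headI]
        omega
    · -- real step
      set x := G.q u with hx
      have hxfresh : x ∉ u.map Prod.fst := G.qFresh u hndu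
      have hcount1 : W.countP (fun p => p.1.headI) ≤ 1 := by
        refine le_trans hcount ?_
        split_ifs <;> omega
      have hgood : goodReal W x := goodReal_holds hOPP hstruct hcount1 hxfresh h1
      have hqr : (simBG G).q W = padQ x := by
        rw [hq']
        simp only [query]
        rw [if_neg h1, if_pos hgood]
      have hbit : (if x ∈ Lpi π then true else false) = (π.toFun (padQ x)).headI :=
        bit_correct π h1
      set t := (π.toFun (padQ x)).headI with htdef
      have hplay1 : G.play (Lpi π) (i+1) = u ++ [(x, t)] := by
        rw [langPlay_succ, ← hu, ← hx, hbit]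
      have hstate1 : state G ((simBG G).play π (i+1)) =
          SimSt.alive (u ++ [(x, t)])
            (c * (((cnt W (padQ x).length false : ℝ) + (cnt W (padQ x).length true : ℝ)) /
              (2 * (cnt W (padQ x).length t : ℝ)))) := by
        rw [simPlay_succ, ← hW, hqr, state_concat' G W _ _, hst]
        simp only [step]
        rw [if_neg h1, if_pos hgood]
      have hm : 1 ≤ x.length := List.length_pos_iff.mpr h1
      have hiff : ((([]:Str) ∈ (u ++ [(x, t)]).map Prod.fst)) ↔
          (([]:Str) ∈ u.map Prod.fst) := by
        rw [List.map_append, List.mem_append]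
        constructor
        · rintro (hh | hh)
          · exact hh
          · exfalso
            simp only [List.map_cons, List.map_nil, List.mem_singleton] at hh
            exact h1 hh.symm
        · exact Or.inl
      refine ⟨_, by rw [hstate1, ← hplay1], ?_, ?_, ?_⟩
      · -- bound
        have hused := used_le hOPP.1 hstruct hcount1 hxfresh rfl
        have htpos : 0 < cnt W (3*x.length) t := by
          have := cnt_pos_of_good hOPP hm hused t
          rwa [padQ_length] at this
        have hf := factor_ge hOPP hm hused t htpos
        rw [hplay1, Sval_append_ne h1 hxfresh, if_congr hiff rfl rfl, padQ_length]
        rw [neg_add, Real.exp_add, ← mul_assoc]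
        exact mul_le_mul hb hf (Real.exp_pos _).le hc0
      · -- structure
        intro p hp
        rw [simPlay_succ, ← hW, List.mem_append] at hp
        rcases hp with hp | hp
        · rcases hstruct p hp with hh | ⟨x', hx'm, hx'ne, hx'eq⟩
          · exact Or.inl hh
          · refine Or.inr ⟨x', ?_, hx'ne, hx'eq⟩
            rw [hplay1, List.map_append, List.mem_append]
            exact Or.inl hx'm
        · rw [List.mem_singleton] at hp
          rw [hp]
          right
          refine ⟨x, ?_, h1, by rw [hqr]⟩
          rw [hplay1, List.map_append, List.mem_append]
          right
          simp
      · -- count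
        rw [hplay1, if_congr hiff rfl rfl]
        rw [simPlay_succ, ← hW, List.countP_append, hqr]
        have : List.countP (fun p => p.1.headI) [(padQ x, π.toFun (padQ x))] = 0 := by
          rw [List.countP_cons]
          simp [padQ_headI h1]
        omega

end Stmt13

/-- if a betting game on languages succeeds on `L_π` for every `π ∈ X`,
then there is a permutation betting game succeeding on every `π ∈ X`. -/
theorem stmt13 (X : Set LPPerm) (G : LangBG) (h : ∀ π ∈ X, G.succeedsOn (Lpi π)) :
    ∃ G' : PermBG, ∀ π ∈ X, G'.succeedsOn π := by
  classical
  refine ⟨Stmt13.simBG G, ?_⟩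
  intro π hπ C
  have hs := h π hπ
  have hpos : ∀ j, 0 < G.d (G.play (Lpi π) j) := Stmt13.langPlay_pos G hs
  set κ := ((1:ℝ)/2) * Real.exp (-2) with hκdef
  have hκ : 0 < κ := by positivity
  have hlow : ∀ i, κ ≤ ((1:ℝ)/2) ^
      (if ([]:Str) ∈ (G.play (Lpi π) i).map Prod.fst then 1 else 0) *
        Real.exp (-(Stmt13.Sval (G.play (Lpi π) i))) := by
    intro i
    have h1 : ((1:ℝ)/2) ≤ ((1:ℝ)/2) ^
        (if ([]:Str) ∈ (G.play (Lpi π) i).map Prod.fst then 1 else 0) := by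
      split_ifs
      · rw [pow_one]
      · rw [pow_zero]; norm_num
    have h2 : Real.exp (-2) ≤ Real.exp (-(Stmt13.Sval (G.play (Lpi π) i))) := by
      apply Real.exp_le_exp.mpr
      have := Stmt13.Sval_le (G.play (Lpi π) i)
      linarith
    rw [hκdef]
    apply mul_le_mul h1 h2 (Real.exp_pos _).le
    positivity
  have hmono : ∀ i, C < G.d (G.play (Lpi π) i) * κ →
      C < (Stmt13.simBG G).d ((Stmt13.simBG G).play π i) := by
    intro i hi
    obtain ⟨c, hst, hb, -, -⟩ := Stmt13.main_inv G π hpos i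
    have hcκ : κ ≤ c := le_trans (hlow i) hb
    have hd : (Stmt13.simBG G).d ((Stmt13.simBG G).play π i)
        = G.d (G.play (Lpi π) i) * c := by
      show Stmt13.stVal G (Stmt13.state G ((Stmt13.simBG G).play π i)) = _
      rw [hst]
      rfl
    rw [hd]
    calc C < G.d (G.play (Lpi π) i) * κ := hi
      _ ≤ G.d (G.play (Lpi π) i) * c :=
        mul_le_mul_of_nonneg_left hcκ (G.nonneg _)
  have hfreq := hs (C / κ)
  refine hfreq.mono ?_
  intro i hi
  apply hmono
  rw [div_lt_iff₀ hκ] at hi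
  exact hi
end

section
/- For every integer k ≥ 1 and every nonempty string x ∈ {0,1}*, the event {π ∈ Π : x ∈ HALFRANGE_k^π} is μ-measurable and μ({π ∈ Π : x ∈ HALFRANGE_k^π}) = 1/2. -/
open Filter MeasureTheory

/-- `x ∈ HALFRANGE_k^π`: `|x| ≥ 1` and there is `y ∈ {0,1}^{k|x|−1}` with `π(0y) = x^k`. -/
def memHalfRange (k : ℕ) (π : LPPerm) (x : Str) : Prop :=
  x ≠ [] ∧ ∃ y : Str, y.length = k * x.length - 1 ∧
    π.toFun (false :: y) = List.flatten (List.replicate k x)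


/-! ### Auxiliary machinery for `stmt16` -/

open scoped ENNReal

/-- The numeric value of `1s` read in binary. -/
def bval (s : Str) : ℕ := s.foldl (fun a b => 2 * a + b.toNat) 1

lemma bval_append (l : Str) (b : Bool) : bval (l ++ [b]) = 2 * bval l + b.toNat := by
  simp [bval, List.foldl_append]

lemma one_le_bval (s : Str) : 1 ≤ bval s := by
  induction s using List.reverseRecOn with
  | nil => simp [bval]
  | append_singleton l b ih => rw [bval_append]; omega

lemma bval_bracket (s : Str) : 2 ^ s.length ≤ bval s ∧ bval s < 2 ^ (s.length + 1) := by
  induction s using List.reverseRecOn with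
  | nil => simp [bval]
  | append_singleton l b ih =>
    rw [bval_append]
    simp only [List.length_append, List.length_singleton]
    have hb : b.toNat ≤ 1 := Bool.toNat_le b
    constructor
    · calc 2 ^ (l.length + 1) = 2 * 2 ^ l.length := by ring
        _ ≤ 2 * bval l + b.toNat := by omega
    · calc 2 * bval l + b.toNat < 2 * 2 ^ (l.length + 1) := by omega
        _ = 2 ^ (l.length + 1 + 1) := by ring

lemma bits_bval (s : Str) : (bval s).bits = s.reverse ++ [true] := by
  induction s using List.reverseRecOn with
  | nil => simp [bval, Nat.one_bits]
  | append_singleton l b ih =>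
    rw [bval_append]
    cases b with
    | false =>
      simp only [Bool.toNat_false, Nat.add_zero]
      rw [Nat.bit0_bits _ (by have := one_le_bval l; omega), ih]
      simp
    | true =>
      simp only [Bool.toNat_true]
      rw [Nat.bit1_bits, ih]
      simp


lemma bits_ne_nil : ∀ n : ℕ, n ≠ 0 → n.bits ≠ [] := by
  intro n hn
  rcases Nat.even_or_odd n with he | ho
  · obtain ⟨m, hm⟩ := he
    have hm' : n = 2 * m := by omega
    rw [hm', Nat.bit0_bits _ (by omega)]; simp
  · obtain ⟨m, hm⟩ := ho
    rw [hm, Nat.bit1_bits]; simp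

lemma foldr_bits_dropLast : ∀ n : ℕ, n ≠ 0 →
    (n.bits.dropLast).foldr (fun b a => 2 * a + b.toNat) 1 = n := by
  intro n
  induction n using Nat.strong_induction_on with
  | _ n ih =>
    intro hn
    have key : ∀ b m, m ≠ 0 → n = 2 * m + b.toNat →
        ((b :: m.bits).dropLast).foldr (fun b a => 2 * a + b.toNat) 1 = n := by
      intro b m hm0 hnm
      have hb := Bool.toNat_le b
      rw [List.dropLast_cons_of_ne_nil (bits_ne_nil m hm0), List.foldr_cons,
        ih m (by omega) hm0, hnm]
    rcases Nat.even_or_odd n with he | ho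
    · obtain ⟨m, hm⟩ := he
      have hm' : n = 2 * m := by omega
      have hm0 : m ≠ 0 := by omega
      conv_lhs => rw [hm', Nat.bit0_bits _ hm0]
      exact key false m hm0 (by simpa using hm')
    · obtain ⟨m, hm⟩ := ho
      by_cases hm0 : m = 0
      · subst hm0; simp at hm; subst hm; simp [Nat.one_bits]
      · conv_lhs => rw [hm, Nat.bit1_bits]
        exact key true m hm0 (by simpa using hm)

lemma bval_stdEnum (i : ℕ) : bval (stdEnum i) = i + 1 := by
  unfold stdEnum bval
  rw [List.foldl_reverse]
  exact foldr_bits_dropLast (i + 1) (by omega)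

lemma bval_stdEnum' (i : ℕ) :
    2 ^ (stdEnum i).length ≤ i + 1 ∧ i + 1 < 2 ^ ((stdEnum i).length + 1) := by
  have := bval_bracket (stdEnum i)
  rwa [bval_stdEnum] at this

lemma stdEnum_inj : Function.Injective stdEnum := by
  intro a b h
  have ha := bval_stdEnum a
  have hb := bval_stdEnum b
  rw [h, hb] at ha
  omega

lemma stdEnum_bval_sub_one (s : Str) : stdEnum (bval s - 1) = s := by
  unfold stdEnum
  rw [Nat.sub_add_cancel (one_le_bval s), bits_bval, List.dropLast_concat, List.reverse_reverse]


lemma mem_strsOfLen {n : ℕ} {s : Str} : s ∈ strsOfLen n ↔ s.length = n := by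
  constructor
  · intro h
    obtain ⟨f, -, rfl⟩ := Finset.mem_image.mp h
    simp
  · intro h
    subst h
    exact Finset.mem_image.mpr ⟨fun i => s.get i, Finset.mem_univ _, List.ofFn_get s⟩

lemma card_strsOfLen (n : ℕ) : (strsOfLen n).card = 2 ^ n := by
  rw [strsOfLen, Finset.card_image_of_injective _ (List.ofFn_injective)]
  simp [Finset.card_univ]

lemma log2_bracket (n : ℕ) (hn : n ≠ 0) : 2 ^ n.log2 ≤ n ∧ n < 2 ^ (n.log2 + 1) := by
  exact ⟨(Nat.le_log2 hn).mp le_rfl, (Nat.log2_lt hn).mp (Nat.lt_succ_self _)⟩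

lemma log2_eq {n N : ℕ} (h1 : 2 ^ N ≤ n) (h2 : n < 2 ^ (N + 1)) : n.log2 = N := by
  have hp : (1:ℕ) ≤ 2 ^ N := Nat.one_le_two_pow
  have hn : n ≠ 0 := by omega
  have ha := (Nat.le_log2 hn).mpr h1
  have hb : n.log2 < N + 1 := (Nat.log2_lt hn).mpr h2
  omega

noncomputable def muLen (j : ℕ) : ℝ :=
  (∏ k ∈ Finset.range (Nat.log2 (j + 1)), (1 : ℝ) / (Nat.factorial (2 ^ k))) *
      (Nat.factorial (2 ^ Nat.log2 (j + 1) - (j - (2 ^ Nat.log2 (j + 1) - 1)))) /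
      (Nat.factorial (2 ^ Nat.log2 (j + 1)))

lemma muLen_pos (j : ℕ) : 0 < muLen j := by
  unfold muLen
  apply div_pos
  · apply mul_pos
    · apply Finset.prod_pos
      intro k _
      positivity
    · exact_mod_cast Nat.factorial_pos _
  · exact_mod_cast Nat.factorial_pos _

lemma muLen_zero : muLen 0 = 1 := by
  have : Nat.log2 1 = 0 := log2_eq (by norm_num) (by norm_num)
  simp [muLen, this]

lemma muLen_succ (j : ℕ) :
    muLen (j + 1) = muLen j / ((2 ^ Nat.log2 (j + 1) - (j - (2 ^ Nat.log2 (j + 1) - 1)) : ℕ) : ℝ) := by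
  set N := Nat.log2 (j + 1) with hN
  obtain ⟨hb1, hb2⟩ := log2_bracket (j + 1) (by omega)
  rw [← hN] at hb1 hb2
  have hp : (1:ℕ) ≤ 2 ^ N := Nat.one_le_two_pow
  set m := j - (2 ^ N - 1) with hm
  have hmlt : m < 2 ^ N := by omega
  set F := 2 ^ N - m with hF
  have hF1 : 1 ≤ F := by omega
  by_cases hcase : j + 2 < 2 ^ (N + 1)
  · -- same level
    have hlog : Nat.log2 (j + 2) = N := log2_eq (by omega) hcase
    have hm' : (j + 1) - (2 ^ N - 1) = m + 1 := by omega
    unfold muLen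
    rw [show j + 1 + 1 = j + 2 by ring, hlog, ← hN, hm']
    have hfact : (2 ^ N - m).factorial = (2 ^ N - m) * (2 ^ N - (m + 1)).factorial := by
      rw [show 2 ^ N - m = (2 ^ N - (m + 1)) + 1 by omega]
      rw [Nat.factorial_succ]
    rw [← hm, ← hF, hfact]
    have hFne : (F : ℝ) ≠ 0 := by exact_mod_cast by omega
    have hfne : ((2 ^ N).factorial : ℝ) ≠ 0 := by exact_mod_cast (Nat.factorial_pos _).ne'
    push_cast
    field_simp
    ring
  · -- level boundary: j + 2 = 2 ^ (N + 1)
    have hj2 : j + 2 = 2 ^ (N + 1) := by omega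
    have hup : j + 2 < 2 ^ (N + 1 + 1) := by
      have h1 : (1:ℕ) ≤ 2 ^ (N + 1) := Nat.one_le_two_pow
      have h2 : 2 ^ (N + 1 + 1) = 2 * 2 ^ (N + 1) := by ring
      omega
    have hlog : Nat.log2 (j + 2) = N + 1 := log2_eq (le_of_eq hj2.symm) hup
    have hmeq : m = 2 ^ N - 1 := by
      have : 2 ^ (N + 1) = 2 * 2 ^ N := by ring
      omega
    have hFeq : F = 1 := by omega
    unfold muLen
    rw [show j + 1 + 1 = j + 2 by ring, hlog, ← hN]
    have h0 : (j + 1) - (2 ^ (N + 1) - 1) = 0 := by omega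
    have hfne : ((2 ^ N).factorial : ℝ) ≠ 0 := by exact_mod_cast (Nat.factorial_pos _).ne'
    have hfne' : ((2 ^ (N+1)).factorial : ℝ) ≠ 0 := by exact_mod_cast (Nat.factorial_pos _).ne'
    rw [h0, Finset.prod_range_succ, show 2 ^ N - (j - (2 ^ N - 1)) = 1 by omega, hFeq]
    simp only [Nat.sub_zero, Nat.factorial_one, Nat.cast_one]
    field_simp

lemma length_stdEnum (i : ℕ) : (stdEnum i).length = Nat.log2 (i + 1) := by
  obtain ⟨h1, h2⟩ := bval_stdEnum' i
  exact (log2_eq h1 h2).symm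

lemma card_freeSet {g : List Str} (hg : IsPPP g) :
    (freeSet g).card =
      2 ^ Nat.log2 (g.length + 1) - (g.length - (2 ^ Nat.log2 (g.length + 1) - 1)) := by
  set j := g.length with hj
  set N := Nat.log2 (j + 1) with hN
  obtain ⟨hb1, hb2⟩ := log2_bracket (j + 1) (by omega)
  rw [← hN] at hb1 hb2
  have hp : (1:ℕ) ≤ 2 ^ N := Nat.one_le_two_pow
  set d := 2 ^ N - 1 with hd
  have hkey : (strsOfLen N).filter (fun s => s ∈ g) = (g.drop d).toFinset := by
    ext s
    simp only [Finset.mem_filter, mem_strsOfLen, List.mem_toFinset]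
    constructor
    · rintro ⟨hlen, hmem⟩
      obtain ⟨i, hi, rfl⟩ := List.getElem_of_mem hmem
      have hli : (g[i]).length = Nat.log2 (i + 1) := by
        have := hg.2 i hi
        rw [show g.get ⟨i, hi⟩ = g[i] from rfl] at this
        rw [this, length_stdEnum]
      have h2 : 2 ^ N ≤ i + 1 := by
        have hNi : N = Nat.log2 (i + 1) := by rw [← hli, hlen]
        rw [hNi]
        exact (log2_bracket (i + 1) (by omega)).1
      have hdi : d ≤ i := by omega
      have : g[i] = (g.drop d)[i - d]'(by simp [List.length_drop]; omega) := by
        rw [List.getElem_drop]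
        congr 1
        omega
      rw [this]
      exact List.getElem_mem _
    · intro hmem
      refine ⟨?_, List.mem_of_mem_drop hmem⟩
      obtain ⟨i', hi', rfl⟩ := List.getElem_of_mem hmem
      have hlen' : i' < j - d := by simpa [List.length_drop] using hi'
      rw [List.getElem_drop]
      have hlt : d + i' < j := by omega
      have := hg.2 (d + i') hlt
      rw [show g.get ⟨d + i', hlt⟩ = g[d + i'] from rfl] at this
      rw [this, length_stdEnum]
      exact log2_eq (by omega) (by omega)
  have hcard2 : ((strsOfLen N).filter (fun s => s ∈ g)).card = j - d := by
    rw [hkey, List.toFinset_card_of_nodup (hg.1.sublist (List.drop_sublist d g))]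
    simp [List.length_drop]; rfl
  have hsplit := Finset.card_filter_add_card_filter_not
    (s := strsOfLen N) (p := fun s => s ∈ g)
  have : freeSet g = (strsOfLen N).filter (fun x => x ∉ g) := by
    rw [freeSet, ← hj, length_stdEnum]
  rw [this]
  have := card_strsOfLen N
  omega

lemma muPPP_eq_muLen (g : List Str) : muPPP g = muLen g.length := rfl

lemma muPPP_nil : muPPP ([] : List Str) = 1 := by
  rw [muPPP_eq_muLen]; exact muLen_zero

lemma mem_freeSet {g : List Str} {x : Str} :
    x ∈ freeSet g ↔ x.length = (stdEnum g.length).length ∧ x ∉ g := by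
  simp [freeSet, mem_strsOfLen, Finset.mem_filter]

lemma one_le_card_freeSet {g : List Str} (hg : IsPPP g) : 1 ≤ (freeSet g).card := by
  rw [card_freeSet hg]
  obtain ⟨h1, h2⟩ := log2_bracket (g.length + 1) (by omega)
  have hp : (1:ℕ) ≤ 2 ^ Nat.log2 (g.length + 1) := Nat.one_le_two_pow
  have hq : 2 ^ (Nat.log2 (g.length + 1) + 1) = 2 * 2 ^ Nat.log2 (g.length + 1) := by ring
  omega

lemma muPPP_append {g : List Str} {x : Str} (hg : IsPPP g) :
    muPPP (g ++ [x]) = muPPP g / ((freeSet g).card : ℝ) := by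
  rw [muPPP_eq_muLen, muPPP_eq_muLen, List.length_append, List.length_singleton,
    muLen_succ, card_freeSet hg]

lemma getElem_concat_self {α : Type*} (l : List α) (a : α) (w : l.length < (l ++ [a]).length) :
    (l ++ [a])[l.length]'w = a :=
  List.getElem_concat_length rfl w

lemma mem_cyl_append {g : List Str} {x : Str} {π : LPPerm} :
    π ∈ cyl (g ++ [x]) ↔ π ∈ cyl g ∧ π.toFun (stdEnum g.length) = x := by
  constructor
  · intro h
    constructor
    · intro i hi
      have hi' : i < (g ++ [x]).length := by simp; omega
      have := h i hi'
      rwa [show (g ++ [x]).get ⟨i, hi'⟩ = (g ++ [x])[i] from rfl,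
        List.getElem_append_left hi] at this
    · have hi' : g.length < (g ++ [x]).length := by simp
      have := h g.length hi'
      rwa [show (g ++ [x]).get ⟨g.length, hi'⟩ = (g ++ [x])[g.length] from rfl,
        getElem_concat_self] at this
  · rintro ⟨h1, h2⟩ i hi
    have hi2 : i < g.length + 1 := by simpa using hi
    rcases Nat.lt_or_ge i g.length with hlt | hge
    · rw [show (g ++ [x]).get ⟨i, hi⟩ = (g ++ [x])[i] from rfl, List.getElem_append_left hlt]
      exact h1 i hlt
    · have hieq : i = g.length := by omega
      subst hieq
      rw [show (g ++ [x]).get ⟨g.length, hi⟩ = (g ++ [x])[g.length] from rfl,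
        getElem_concat_self]
      exact h2

lemma isPPP_append {g : List Str} {x : Str} (hg : IsPPP g) (hx : x ∈ freeSet g) :
    IsPPP (g ++ [x]) := by
  obtain ⟨hlen, hnot⟩ := mem_freeSet.mp hx
  constructor
  · rw [List.nodup_append]
    exact ⟨hg.1, List.nodup_singleton x, fun a ha b hb hab => by simp at hb; subst hb; subst hab; exact hnot ha⟩
  · intro i hi
    rcases Nat.lt_or_ge i g.length with hlt | hge
    · rw [show (g ++ [x]).get ⟨i, hi⟩ = (g ++ [x])[i] from rfl, List.getElem_append_left hlt]
      exact hg.2 i hlt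
    · have hieq : i = g.length := by simp at hi; omega
      subst hieq
      rw [show (g ++ [x]).get ⟨g.length, hi⟩ = (g ++ [x])[g.length] from rfl,
        getElem_concat_self]
      exact hlen

lemma muPPP_pos (g : List Str) : 0 < muPPP g := muLen_pos g.length

set_option maxHeartbeats 2000000 in
lemma main_step (μ : Measure LPPerm)
    (hμ : ∀ g, IsPPP g → μ (cyl g) = ENNReal.ofReal (muPPP g))
    (t : Str) (i : ℕ) (ht : t.length = (stdEnum i).length) :
    ∀ d g, IsPPP g → g.length + d = i → t ∉ g →
      MeasurableSet (cyl g ∩ {π : LPPerm | π.toFun (stdEnum i) = t}) ∧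
      μ (cyl g ∩ {π : LPPerm | π.toFun (stdEnum i) = t}) =
        ENNReal.ofReal (muPPP g /
          (((strsOfLen t.length).filter (fun s => s ∉ g)).card : ℝ)) := by
  intro d
  induction d with
  | zero =>
    intro g hg hlen htg
    have hgl : g.length = i := by omega
    have htfree : t ∈ freeSet g := mem_freeSet.mpr ⟨by rw [hgl, ← ht], htg⟩
    have hEq : cyl g ∩ {π : LPPerm | π.toFun (stdEnum i) = t} = cyl (g ++ [t]) := by
      ext π
      rw [Set.mem_inter_iff, mem_cyl_append, hgl]
      exact Iff.rfl
    have hppp : IsPPP (g ++ [t]) := isPPP_append hg htfree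
    have hfs : freeSet g = (strsOfLen t.length).filter (fun s => s ∉ g) := by
      rw [freeSet, hgl, ← ht]
    constructor
    · rw [hEq]
      exact MeasurableSpace.measurableSet_generateFrom ⟨g ++ [t], hppp, rfl⟩
    · rw [hEq, hμ _ hppp, muPPP_append hg, hfs]
  | succ d ih =>
    intro g hg hlen htg
    have hjlt : g.length < i := by omega
    set j := g.length with hj
    set E := {π : LPPerm | π.toFun (stdEnum i) = t} with hE
    set S := freeSet g with hS
    have hcov : cyl g ∩ E = ⋃ x ∈ S, (cyl (g ++ [x]) ∩ E) := by
      ext π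
      simp only [Set.mem_inter_iff, Set.mem_iUnion, exists_prop]
      constructor
      · rintro ⟨hc, he⟩
        refine ⟨π.toFun (stdEnum j), ?_, mem_cyl_append.mpr ⟨hc, rfl⟩, he⟩
        refine mem_freeSet.mpr ⟨π.lenPres _, ?_⟩
        intro hmem
        obtain ⟨i', hi', hgi⟩ := List.getElem_of_mem hmem
        have h1 : π.toFun (stdEnum i') = π.toFun (stdEnum j) := by
          rw [hc i' hi']; exact hgi
        have h2 := stdEnum_inj (π.bij.1 h1)
        omega
      · rintro ⟨x, _, hcx, he⟩
        exact ⟨(mem_cyl_append.mp hcx).1, he⟩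
    have hempty : cyl (g ++ [t]) ∩ E = ∅ := by
      ext π
      simp only [Set.mem_inter_iff, Set.mem_empty_iff_false, iff_false, not_and]
      intro hc he
      have h1 : π.toFun (stdEnum j) = t := (mem_cyl_append.mp hc).2
      have he' : π.toFun (stdEnum i) = t := he
      have h2 := stdEnum_inj (π.bij.1 (h1.trans he'.symm))
      omega
    have hmeas : ∀ x ∈ S, MeasurableSet (cyl (g ++ [x]) ∩ E) := by
      intro x hx
      by_cases hxt : x = t
      · subst hxt; rw [hempty]; exact MeasurableSet.empty
      · refine (ih (g ++ [x]) (isPPP_append hg hx) (by simp [← hj]; omega) ?_).1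
        simp only [List.mem_append, List.mem_singleton]
        rintro (h | h)
        · exact htg h
        · exact hxt h.symm
    have hdisj : (S : Set Str).PairwiseDisjoint (fun x => cyl (g ++ [x]) ∩ E) := by
      intro a _ b _ hab
      refine Set.disjoint_left.mpr (fun π hπa hπb => hab ?_)
      have h1 := (mem_cyl_append.mp hπa.1).2
      have h2 := (mem_cyl_append.mp hπb.1).2
      exact h1.symm.trans h2
    have hmeasure : μ (cyl g ∩ E) = ∑ x ∈ S, μ (cyl (g ++ [x]) ∩ E) := by
      rw [hcov]
      exact measure_biUnion_finset hdisj hmeas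
    obtain ⟨c, hc⟩ : ∃ n, ((strsOfLen t.length).filter (fun s => s ∉ g)).card = n := ⟨_, rfl⟩
    have hval : ∀ x ∈ S, x ≠ t →
        μ (cyl (g ++ [x]) ∩ E) =
          ENNReal.ofReal ((muPPP g / (S.card : ℝ)) /
            ((((strsOfLen t.length).filter (fun s => s ∉ g)).erase x).card : ℝ)) := by
      intro x hx hxt
      have htg' : t ∉ g ++ [x] := by
        simp only [List.mem_append, List.mem_singleton]
        rintro (h | h)
        · exact htg h
        · exact hxt h.symm
      have hv := (ih (g ++ [x]) (isPPP_append hg hx) (by simp [← hj]; omega) htg').2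
      rw [hv, muPPP_append hg]
      have hfe : (strsOfLen t.length).filter (fun s => s ∉ g ++ [x]) =
          ((strsOfLen t.length).filter (fun s => s ∉ g)).erase x := by
        ext s
        simp only [Finset.mem_filter, Finset.mem_erase, List.mem_append, List.mem_singleton]
        constructor
        · rintro ⟨hs, hng⟩
          exact ⟨fun h => hng (Or.inr h), hs, fun h => hng (Or.inl h)⟩
        · rintro ⟨hsx, hs, hng⟩
          exact ⟨hs, fun h => h.elim hng hsx⟩
      rw [hfe]
    refine ⟨by rw [hcov]; exact S.measurableSet_biUnion hmeas, ?_⟩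
    have h0mu : 0 ≤ muPPP g := (muPPP_pos g).le
    have hScard : 1 ≤ S.card := one_le_card_freeSet hg
    by_cases hL : (stdEnum j).length = t.length
    · -- same level as t
      have hSeq : S = (strsOfLen t.length).filter (fun s => s ∉ g) := by
        rw [hS, freeSet, ← hj, hL]
      have htS : t ∈ S := by
        rw [hSeq]; exact Finset.mem_filter.mpr ⟨mem_strsOfLen.mpr rfl, htg⟩
      have hcS : S.card = c := by rw [hSeq, hc]
      have hc2 : 2 ≤ c := by
        rw [← hcS, hS, card_freeSet hg, ← hj]
        have hNi := length_stdEnum i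
        have hNj := length_stdEnum j
        have heq : Nat.log2 (j + 1) = Nat.log2 (i + 1) := by
          rw [← hNj, ← hNi, hL, ht]
        obtain ⟨hbj1, _⟩ := log2_bracket (j + 1) (by omega)
        obtain ⟨_, hbi2⟩ := log2_bracket (i + 1) (by omega)
        have hup : i + 1 < 2 ^ (Nat.log2 (j + 1) + 1) := by rw [heq]; exact hbi2
        have h2 : 2 ^ (Nat.log2 (j + 1) + 1) = 2 * 2 ^ Nat.log2 (j + 1) := by ring
        omega
      rw [hmeasure, ← Finset.add_sum_erase S _ htS, hempty, measure_empty, zero_add]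
      have hall : ∀ x ∈ S.erase t, μ (cyl (g ++ [x]) ∩ E) =
          ENNReal.ofReal ((muPPP g / (c : ℝ)) / ((c - 1 : ℕ) : ℝ)) := by
        intro x hxe
        obtain ⟨hxt, hxS⟩ := Finset.mem_erase.mp hxe
        rw [hval x hxS hxt, hcS, ← hSeq, Finset.card_erase_of_mem hxS, hcS]
      rw [Finset.sum_congr rfl hall, Finset.sum_const, Finset.card_erase_of_mem htS, hcS,
        nsmul_eq_mul, ← ENNReal.ofReal_natCast (c - 1),
        ← ENNReal.ofReal_mul (Nat.cast_nonneg _), hc]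
      congr 1
      have h1 : ((c - 1 : ℕ) : ℝ) ≠ 0 := Nat.cast_ne_zero.mpr (by omega)
      rw [mul_comm, div_mul_cancel₀ _ h1]
    · -- different level
      have hxt : ∀ x ∈ S, x ≠ t := by
        intro x hx h
        subst h
        exact hL ((mem_freeSet.mp hx).1 ▸ rfl)
      have hcu : ∀ x ∈ S, (((strsOfLen t.length).filter (fun s => s ∉ g)).erase x).card = c := by
        intro x hx
        rw [Finset.erase_eq_of_notMem, hc]
        intro hmem
        have h1 := mem_strsOfLen.mp (Finset.mem_filter.mp hmem).1
        have h2 := (mem_freeSet.mp hx).1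
        rw [← hj] at h2
        exact hL (h2 ▸ h1)
      rw [hmeasure]
      have hall : ∀ x ∈ S, μ (cyl (g ++ [x]) ∩ E) =
          ENNReal.ofReal ((muPPP g / (S.card : ℝ)) / (c : ℝ)) := by
        intro x hx
        rw [hval x hx (hxt x hx), hcu x hx]
      rw [Finset.sum_congr rfl hall, Finset.sum_const, nsmul_eq_mul,
        ← ENNReal.ofReal_natCast S.card, ← ENNReal.ofReal_mul (Nat.cast_nonneg _), hc]
      congr 1
      have h1 : ((S.card : ℕ) : ℝ) ≠ 0 := Nat.cast_ne_zero.mpr (by omega)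
      rw [div_right_comm, mul_comm, div_mul_cancel₀ _ h1]

lemma cyl_nil : cyl ([] : List Str) = Set.univ := by
  ext π
  simp only [cyl, Set.mem_setOf_eq, Set.mem_univ, iff_true]
  intro i h
  simp at h

lemma isPPP_nil : IsPPP ([] : List Str) := ⟨List.nodup_nil, fun i h => by simp at h⟩

lemma measure_single (μ : Measure LPPerm)
    (hμ : ∀ g, IsPPP g → μ (cyl g) = ENNReal.ofReal (muPPP g))
    (t : Str) (i : ℕ) (ht : t.length = (stdEnum i).length) :
    MeasurableSet {π : LPPerm | π.toFun (stdEnum i) = t} ∧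
    μ {π : LPPerm | π.toFun (stdEnum i) = t} =
      ENNReal.ofReal (1 / 2 ^ t.length) := by
  have h := main_step μ hμ t i ht i [] isPPP_nil (by simp) (by simp)
  rw [cyl_nil, Set.univ_inter] at h
  have hfilter : ((strsOfLen t.length).filter (fun s => s ∉ ([] : List Str))).card
      = 2 ^ t.length := by
    rw [Finset.filter_true_of_mem (fun s _ => by simp), card_strsOfLen]
  rw [muPPP_nil, hfilter] at h
  convert h using 3
  push_cast
  ring


/-- for every `k ≥ 1` and nonempty `x`, the event
`{π ∈ Π : x ∈ HALFRANGE_k^π}` is μ-measurable and has μ-probability `1/2`. -/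
theorem stmt16 (μ : Measure LPPerm) (hprob : IsProbabilityMeasure μ)
    (hμ : ∀ g, IsPPP g → μ (cyl g) = ENNReal.ofReal (muPPP g))
    (k : ℕ) (hk : 1 ≤ k) (x : Str) (hx : x ≠ []) :
    MeasurableSet {π : LPPerm | memHalfRange k π x} ∧
    μ {π : LPPerm | memHalfRange k π x} = 1 / 2 := by
  set n := k * x.length with hn
  have hn1 : 1 ≤ n := by
    have : 1 ≤ x.length := List.length_pos_iff.mpr hx
    have := Nat.mul_le_mul hk this
    simpa [hn] using this
  set X := List.flatten (List.replicate k x) with hX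
  have hXlen : X.length = n := by
    rw [hX, List.length_flatten, List.map_replicate, List.sum_replicate, smul_eq_mul]
  have hset : {π : LPPerm | memHalfRange k π x} =
      ⋃ y ∈ strsOfLen (n - 1),
        {π : LPPerm | π.toFun (stdEnum (bval (false :: y) - 1)) = X} := by
    ext π
    simp only [Set.mem_setOf_eq, memHalfRange, Set.mem_iUnion, exists_prop, mem_strsOfLen,
      stdEnum_bval_sub_one]
    constructor
    · rintro ⟨-, y, hy, hπ⟩
      exact ⟨y, by omega, hπ⟩
    · rintro ⟨y, hy, hπ⟩
      exact ⟨hx, y, by omega, hπ⟩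
  have hht : ∀ y ∈ strsOfLen (n - 1),
      X.length = (stdEnum (bval (false :: y) - 1)).length := by
    intro y hy
    rw [stdEnum_bval_sub_one, hXlen, List.length_cons, mem_strsOfLen.mp hy]
    omega
  have hmeas : ∀ y ∈ strsOfLen (n - 1),
      MeasurableSet {π : LPPerm | π.toFun (stdEnum (bval (false :: y) - 1)) = X} :=
    fun y hy => (measure_single μ hμ X _ (hht y hy)).1
  constructor
  · rw [hset]
    exact (strsOfLen (n - 1)).measurableSet_biUnion hmeas
  · rw [hset]
    have hdisj : ((strsOfLen (n - 1) : Finset Str) : Set Str).PairwiseDisjoint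
        (fun y => {π : LPPerm | π.toFun (stdEnum (bval (false :: y) - 1)) = X}) := by
      intro a _ b _ hab
      refine Set.disjoint_left.mpr (fun π hπa hπb => hab ?_)
      rw [Set.mem_setOf_eq, stdEnum_bval_sub_one] at hπa hπb
      have := π.bij.1 (hπa.trans hπb.symm)
      exact (List.cons.injEq _ _ _ _ ▸ this).2
    rw [measure_biUnion_finset hdisj hmeas]
    have hval : ∀ y ∈ strsOfLen (n - 1),
        μ {π : LPPerm | π.toFun (stdEnum (bval (false :: y) - 1)) = X} =
          ENNReal.ofReal (1 / 2 ^ n) := by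
      intro y hy
      rw [(measure_single μ hμ X _ (hht y hy)).2, hXlen]
    rw [Finset.sum_congr rfl hval, Finset.sum_const, card_strsOfLen, nsmul_eq_mul]
    have hcast : ((2 ^ (n - 1) : ℕ) : ℝ≥0∞) = ENNReal.ofReal ((2 : ℝ) ^ (n - 1)) := by
      rw [← ENNReal.ofReal_natCast]
      push_cast
      ring_nf
    rw [hcast, ← ENNReal.ofReal_mul (by positivity)]
    have harith : (2 : ℝ) ^ (n - 1) * (1 / 2 ^ n) = 1 / 2 := by
      have h2 : (2 : ℝ) ^ n = 2 ^ (n - 1) * 2 := by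
        rw [← pow_succ]
        congr 1
        omega
      rw [h2]
      have : (2 : ℝ) ^ (n - 1) ≠ 0 := by positivity
      field_simp
    rw [harith]
    rw [ENNReal.ofReal_div_of_pos (by norm_num), ENNReal.ofReal_one, ENNReal.ofReal_ofNat]
end
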